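/- For every finite word w, the infinite defect D_∞(w) = min{D(z) : z an infinite word over Alph(w) containing w as a factor} is finite; in particular the periodic word (w^(+))^∞ has finite defect. -/

import Mathlib

/-!
Both claims follow from a bound for a nonempty palindrome `p`: every factor of `p^∞` has defect
at most `2|p|`. For the first claim take `p = w w̃`, whose letters are those of `w`.

Let `d` be the least period of `z = p^∞`. It divides `|p|`, so `z` is invariant under every
reflection `x ↦ d m - 1 - x`. In a factor of `z` starting at `i`, every position `e ≥ i + 2d - 2`
is the end of a palindrome whose start `a ∈ [i, i + d)` satisfies `d ∣ a + e + 1`. These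
palindromes have length at least `d`, so two equal ones with different starts would give `z` a
period smaller than `d`. They are therefore pairwise distinct, and only the first `2d - 2`
positions can contribute to the defect.
-/

open List

variable {A : Type*}

/-- All factors (contiguous subwords) of a word, as a list. -/
def Factors (w : List A) : List (List A) := w.tails.flatMap List.inits

/-- The set of distinct palindromic factors of `w` (including the empty word). -/
def palFactors [DecidableEq A] (w : List A) : Finset (List A) :=
  ((Factors w).filter (fun u => decide (u.reverse = u))).toFinset

/-- A word is rich if it has exactly `|w| + 1` distinct palindromic factors. -/
def IsRich [DecidableEq A] (w : List A) : Prop :=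
  (palFactors w).card = w.length + 1

/-- The defect of a finite word. -/
def defect [DecidableEq A] (w : List A) : ℕ :=
  w.length + 1 - (palFactors w).card

/-- `u` is a (finite) factor of the infinite word `z`. -/
def FactorOfInf (u : List A) (z : ℕ → A) : Prop :=
  ∃ i, u = (List.range u.length).map (fun k => z (i + k))

/-- An infinite word is rich if all of its finite factors are rich. -/
def InfRich [DecidableEq A] (z : ℕ → A) : Prop :=
  ∀ u : List A, FactorOfInf u z → IsRich u

/-- The longest palindromic suffix of `w`. -/
def lps [DecidableEq A] (w : List A) : List A :=
  (w.tails.find? (fun u => decide (u.reverse = u))).getD []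

/-- The number of occurrences of `u` as a factor of `w` (counted by position). -/
def occCount [DecidableEq A] (u w : List A) : ℕ :=
  w.tails.countP (fun t => decide (u <+: t))

/-- The periodic infinite word `u^∞`. -/
def periodicWord (u : List A) (hu : u ≠ []) : ℕ → A :=
  fun i => u.get ⟨i % u.length, Nat.mod_lt _ (List.length_pos_iff.mpr hu)⟩

open Function

section Palindromes

variable [DecidableEq A]

theorem mem_palFactors {u w : List A} : u ∈ palFactors w ↔ u <:+: w ∧ u.reverse = u := by
  simp only [palFactors, Factors, List.mem_toFinset, List.mem_filter, List.mem_flatMap,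
    List.mem_tails, List.mem_inits, decide_eq_true_eq, List.infix_iff_prefix_suffix]
  exact and_congr_left fun _ => ⟨fun ⟨t, ht, hu⟩ => ⟨t, hu, ht⟩, fun ⟨t, hu, ht⟩ => ⟨t, ht, hu⟩⟩

theorem defect_le_of_injOn {w : List A} {m : ℕ} {f : ℕ → List A}
    (hf : ∀ j < m, f j ∈ palFactors w ∧ f j ≠ []) (hinj : Set.InjOn f (Set.Iio m)) :
    defect w ≤ w.length - m := by
  have hsub : insert [] ((Finset.range m).image f) ⊆ palFactors w := by
    refine Finset.insert_subset (mem_palFactors.2 ⟨List.nil_infix, rfl⟩) ?_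
    simpa [Finset.image_subset_iff] using fun j hj => (hf j hj).1
  have hcard : (insert [] ((Finset.range m).image f)).card = m + 1 := by
    rw [Finset.card_insert_of_notMem, Finset.card_image_of_injOn (by simpa using hinj),
      Finset.card_range]
    simpa using fun j hj => (hf j hj).2
  have := Finset.card_le_card hsub
  unfold defect
  omega

end Palindromes

section FactorAt

def factorAt (z : ℕ → A) (a ℓ : ℕ) : List A := (List.range ℓ).map fun k => z (a + k)

variable {z : ℕ → A}

theorem factorOfInf_iff {u : List A} : FactorOfInf u z ↔ ∃ i, u = factorAt z i u.length :=
  Iff.rfl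

@[simp]
theorem length_factorAt (a ℓ : ℕ) : (factorAt z a ℓ).length = ℓ := by
  simp [factorAt]

@[simp]
theorem getElem_factorAt {a ℓ k : ℕ} (hk : k < (factorAt z a ℓ).length) :
    (factorAt z a ℓ)[k] = z (a + k) := by
  simp [factorAt]

theorem factorAt_add (a ℓ₁ ℓ₂ : ℕ) :
    factorAt z a (ℓ₁ + ℓ₂) = factorAt z a ℓ₁ ++ factorAt z (a + ℓ₁) ℓ₂ := by
  simp [factorAt, List.range_add, Function.comp_def, add_assoc]

theorem factorAt_infix {i n a ℓ : ℕ} (hi : i ≤ a) (hn : a + ℓ ≤ i + n) :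
    factorAt z a ℓ <:+: factorAt z i n := by
  obtain ⟨s, rfl⟩ := Nat.exists_eq_add_of_le hi
  obtain ⟨t, rfl⟩ := Nat.exists_eq_add_of_le (show s + ℓ ≤ n by omega)
  rw [factorAt_add, factorAt_add, ← add_assoc]
  exact List.infix_append _ _ _

theorem reverse_factorAt_eq_self {a ℓ : ℕ} (h : ∀ k < ℓ, z (a + (ℓ - 1 - k)) = z (a + k)) :
    (factorAt z a ℓ).reverse = factorAt z a ℓ :=
  List.ext_getElem (by simp) fun k hk _ => by
    simp only [List.length_reverse, length_factorAt] at hk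
    simp [List.getElem_reverse, h k hk]

end FactorAt

theorem Function.Periodic.eq_of_eqOn_Ico {f g : ℕ → A} {d a : ℕ} (hd : 0 < d)
    (hf : Periodic f d) (hg : Periodic g d) (h : Set.EqOn f g (Set.Ico a (a + d))) : f = g := by
  funext x
  have hx : ∀ φ : ℕ → A, Periodic φ d → φ x = φ (a + (x + a * d - a) % d) := by
    intro φ hφ
    have h₁ := hφ.nat_mul a x
    have h₂ := hφ.nat_mul ((x + a * d - a) / d) (a + (x + a * d - a) % d)
    simp only [Nat.cast_id] at h₁ h₂
    rw [← h₁, ← h₂]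
    have := Nat.mod_add_div' (x + a * d - a) d
    have : a ≤ a * d := Nat.le_mul_of_pos_right a hd
    congr 1
    omega
  rw [hx f hf, hx g hg]
  exact h ⟨by omega, by have := Nat.mod_lt (x + a * d - a) hd; omega⟩

theorem isPeriodicPt_shift_iff {z : ℕ → A} {n : ℕ} :
    IsPeriodicPt (fun z : ℕ → A => fun x => z (x + 1)) n z ↔ Periodic z n := by
  have : (fun z : ℕ → A => fun x => z (x + 1))^[n] z = fun x => z (x + n) := by
    induction n with
    | zero => rfl
    | succ n ih => rw [iterate_succ_apply', ih]; simp only [add_right_comm, add_assoc]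
  rw [IsPeriodicPt, IsFixedPt, this, funext_iff]
  rfl

theorem exists_mem_Ico_dvd_add {d : ℕ} (hd : 0 < d) (i c : ℕ) :
    ∃ a, i ≤ a ∧ a < i + d ∧ d ∣ a + c := by
  -- `(i + c) + (d - 1) (i + c) = d (i + c)`
  refine ⟨i + (d - 1) * (i + c) % d, by omega,
    by have := Nat.mod_lt ((d - 1) * (i + c)) hd; omega, ?_⟩
  have h : d ∣ (i + c) + (d - 1) * (i + c) := ⟨i + c, by
    obtain ⟨d, rfl⟩ := Nat.exists_eq_add_of_lt hd; simp; ring⟩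
  rw [← Nat.mod_add_div ((d - 1) * (i + c)) d, ← add_assoc] at h
  rw [add_right_comm]
  exact (Nat.dvd_add_left (dvd_mul_right _ _)).mp h

def MirrorSymmetric (z : ℕ → A) (d : ℕ) : Prop := ∀ x y, d ∣ x + y + 1 → z x = z y

section MinimalPeriod

variable {z : ℕ → A} {d : ℕ}

theorem MirrorSymmetric.of_dvd {L : ℕ} (h : MirrorSymmetric z L) (hL : 0 < L)
    (hper : Periodic z d) (hdL : d ∣ L) : MirrorSymmetric z d := by
  rintro x y ⟨m, hm⟩
  obtain ⟨k, rfl⟩ := hdL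
  obtain ⟨k, rfl⟩ := Nat.exists_eq_add_of_lt (Nat.pos_of_mul_pos_left hL)
  have hy := hper.nat_mul (k * m) y
  simp only [Nat.cast_id] at hy
  rw [← hy]
  refine h x _ ⟨m, ?_⟩
  rw [show x + (y + k * m * d) + 1 = (x + y + 1) + k * m * d by ring, hm]
  ring

theorem eq_of_factorAt_eq (hd : 0 < d) (hper : Periodic z d)
    (hmin : ∀ s, 0 < s → s < d → ¬Periodic z s) {a a' ℓ ℓ' : ℕ} (ha : a ≤ a') (ha' : a' < a + d)
    (hℓ : d ≤ ℓ) (h : factorAt z a ℓ = factorAt z a' ℓ') : a = a' := by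
  by_contra hne
  suffices (fun x => z (x + (a' - a))) = z from
    hmin (a' - a) (by omega) (by omega) fun x => congrFun this x
  refine Periodic.eq_of_eqOn_Ico (a := a) hd (fun x => by simp only [add_right_comm _ d, hper _])
    hper fun x hx => ?_
  obtain ⟨k, rfl⟩ := Nat.exists_eq_add_of_le hx.1
  have hk : k < (factorAt z a ℓ).length := by
    simp only [Set.mem_Ico, length_factorAt] at hx ⊢
    omega
  have := List.getElem_of_eq h hk
  simp only [getElem_factorAt] at this
  rw [this]
  congr 1
  omega

theorem defect_le_of_minimal_period [DecidableEq A] (hd : 0 < d) (hper : Periodic z d)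
    (hmin : ∀ s, 0 < s → s < d → ¬Periodic z s) (hsymm : MirrorSymmetric z d) {u : List A}
    (hu : FactorOfInf u z) : defect u ≤ 2 * d - 2 := by
  obtain ⟨i, hu⟩ := factorOfInf_iff.1 hu
  -- `f t` is the palindrome ending at position `i + 2d - 2 + t` of `z` with start in `[i, i + d)`
  choose a hia hai hdvd using fun t => exists_mem_Ico_dvd_add hd i (i + 2 * d - 1 + t)
  let f t := factorAt z (a t) (i + 2 * d - 1 + t - a t)
  have hf : ∀ t < u.length - (2 * d - 2), f t ∈ palFactors u ∧ f t ≠ [] := by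
    intro t ht
    refine ⟨mem_palFactors.2 ⟨?_, reverse_factorAt_eq_self fun k hk => hsymm _ _ ?_⟩, ?_⟩
    · rw [hu]
      exact factorAt_infix (hia t) (by have := hai t; omega)
    · convert hdvd t using 1
      omega
    · rw [← List.length_pos_iff, length_factorAt]
      have := hai t
      omega
  have hinj : ∀ t t', a t ≤ a t' → f t = f t' → t = t' := by
    intro t t' hle h
    have hℓ := congrArg List.length h
    have := hai t'
    have := hia t
    have := eq_of_factorAt_eq hd hper hmin hle (by omega) (by omega) h
    simp only [f, length_factorAt] at hℓ
    omega
  have := defect_le_of_injOn hf fun t _ t' _ h =>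
    (le_total (a t) (a t')).elim (hinj t t' · h) fun hle => (hinj t' t hle h.symm).symm
  omega

end MinimalPeriod

section PeriodicWord

variable {p : List A} (hp : p ≠ [])

theorem factorOfInf_periodicWord_of_prefix {w : List A} (hw : w <+: p) :
    FactorOfInf w (periodicWord p hp) :=
  ⟨0, List.ext_getElem (by simp) fun k hk _ => by
    have := hw.length_le
    simp [periodicWord, Nat.mod_eq_of_lt (show k < p.length by omega), hw.getElem hk]⟩

theorem periodic_periodicWord : Periodic (periodicWord p hp) p.length := fun x => by
  simp [periodicWord]

theorem mirrorSymmetric_periodicWord (hpal : p.reverse = p) :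
    MirrorSymmetric (periodicWord p hp) p.length := by
  intro x y hxy
  have hL := List.length_pos_iff.2 hp
  have hx := Nat.mod_lt x hL
  have hy := Nat.mod_lt y hL
  have hsum : x % p.length + y % p.length + 1 = p.length := by
    refine Nat.eq_of_dvd_of_lt_two_mul (by omega) ?_ (by omega)
    refine (Nat.ModEq.dvd_iff ?_ dvd_rfl).2 hxy
    exact ((Nat.mod_modEq x _).add (Nat.mod_modEq y _)).add_right 1
  have := List.getElem_of_eq hpal.symm hx
  simp only [periodicWord, List.get_eq_getElem, List.getElem_reverse] at this ⊢
  rw [this]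
  congr 1
  omega

theorem defect_le_of_factorOfInf_periodicWord [DecidableEq A] (hpal : p.reverse = p)
    {u : List A} (hu : FactorOfInf u (periodicWord p hp)) : defect u ≤ 2 * p.length := by
  let shift := fun z : ℕ → A => fun x => z (x + 1)
  have hL := List.length_pos_iff.2 hp
  have hpt : IsPeriodicPt shift p.length (periodicWord p hp) :=
    isPeriodicPt_shift_iff.2 (periodic_periodicWord hp)
  have hdL := hpt.minimalPeriod_dvd
  have hper := isPeriodicPt_shift_iff.1 (isPeriodicPt_minimalPeriod shift (periodicWord p hp))
  have := defect_le_of_minimal_period (hpt.minimalPeriod_pos hL) hper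
    (fun s hs hsd h => not_isPeriodicPt_of_pos_of_lt_minimalPeriod hs.ne' hsd
      (isPeriodicPt_shift_iff.2 h))
    ((mirrorSymmetric_periodicWord hp hpal).of_dvd hL hper hdL) hu
  have := Nat.le_of_dvd hL hdL
  omega

end PeriodicWord

theorem infinite_defect_finite [DecidableEq A] (w : List A) (hw : w ≠ []) :
    (∃ z : ℕ → A, (∀ i, z i ∈ w) ∧ FactorOfInf w z ∧
       ∃ C : ℕ, ∀ u : List A, FactorOfInf u z → defect u ≤ C) ∧
    (∀ p : List A, p.reverse = p → w <+: p →
      (∀ q : List A, q.reverse = q → w <+: q → p.length ≤ q.length) →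
      ∀ hp : p ≠ [],
        ∃ C : ℕ, ∀ u : List A, FactorOfInf u (periodicWord p hp) → defect u ≤ C) := by
  have hp : w ++ w.reverse ≠ [] := by simp [hw]
  refine ⟨⟨periodicWord _ hp, fun i => ?_, ?_, 2 * (w ++ w.reverse).length, fun u => ?_⟩,
    fun p hpal _ _ hp => ⟨2 * p.length, fun u => defect_le_of_factorOfInf_periodicWord hp hpal⟩⟩
  · exact (List.mem_append.1 (List.get_mem _ _)).elim id List.mem_reverse.1
  · exact factorOfInf_periodicWord_of_prefix hp (List.prefix_append _ _)
  · exact defect_le_of_factorOfInf_periodicWord hp (by simp)
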